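/- arXiv:2206.08899 — 2 statements merged into one kernel-verified Lean document; each statement's English description precedes it below -/
import Mathlib

section
/- Let L be a finite set, X a measurable space, and D, D̂ two probability distributions on L × X. Then the expectation, over ℓ drawn from the marginal of D on L, of the total variation distance between the conditional distributions D_{x|ℓ} and D̂_{x|ℓ}, is at most 2·d_TV(D, D̂). -/
open MeasureTheory

/-- Total variation distance between two measures, as the supremum over measurable sets
of the difference of the (real-valued) probabilities. -/
noncomputable def tvDist {α : Type*} [MeasurableSpace α] (μ ν : Measure α) : ℝ :=
  ⨆ s : {s : Set α // MeasurableSet s}, |(μ s.1).toReal - (ν s.1).toReal|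

/-- The conditional distribution of the second coordinate given that the first coordinate
equals `ℓ`. -/
noncomputable def condSnd {L X : Type*} [MeasurableSpace L] [MeasurableSpace X]
    (D : Measure (L × X)) (ℓ : L) : Measure X :=
  (D (Prod.fst ⁻¹' {ℓ}))⁻¹ • (D.restrict (Prod.fst ⁻¹' {ℓ})).map Prod.snd

lemma tv_bdd {α : Type*} [MeasurableSpace α] (μ ν : Measure α) [IsFiniteMeasure μ]
    [IsFiniteMeasure ν] :
    BddAbove (Set.range fun s : {s : Set α // MeasurableSet s} =>
      |(μ s.1).toReal - (ν s.1).toReal|) := by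
  refine ⟨(μ Set.univ).toReal + (ν Set.univ).toReal, ?_⟩
  rintro x ⟨s, rfl⟩
  refine (abs_sub _ _).trans (add_le_add ?_ ?_) <;>
    · rw [abs_of_nonneg ENNReal.toReal_nonneg]
      exact ENNReal.toReal_mono (measure_ne_top _ _) (measure_mono (Set.subset_univ _))

lemma le_tvDist {α : Type*} [MeasurableSpace α] (μ ν : Measure α) [IsFiniteMeasure μ]
    [IsFiniteMeasure ν] {s : Set α} (hs : MeasurableSet s) :
    (μ s).toReal - (ν s).toReal ≤ tvDist μ ν :=
  (le_abs_self _).trans (le_ciSup (tv_bdd μ ν) ⟨s, hs⟩)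

lemma condSnd_apply {L X : Type*} [MeasurableSpace L] [MeasurableSpace X]
    (D : Measure (L × X)) (ℓ : L) {s : Set X} (hs : MeasurableSet s) :
    condSnd D ℓ s = (D (Prod.fst ⁻¹' {ℓ}))⁻¹ * D ({ℓ} ×ˢ s) := by
  rw [condSnd, Measure.smul_apply, Measure.map_apply measurable_snd hs,
    Measure.restrict_apply (measurable_snd hs)]
  congr 2
  ext x
  simp only [Set.mem_inter_iff, Set.mem_preimage, Set.mem_singleton_iff, Set.mem_prod]
  aesop

lemma prod_subset_fiber {L X : Type*} (ℓ : L) (s : Set X) :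
    {ℓ} ×ˢ s ⊆ Prod.fst ⁻¹' {ℓ} := fun x hx => hx.1

lemma condSnd_isProb {L X : Type*} [MeasurableSpace L] [MeasurableSpace X]
    (D : Measure (L × X)) [IsFiniteMeasure D] (ℓ : L)
    (hp : D (Prod.fst ⁻¹' {ℓ}) ≠ 0) : IsProbabilityMeasure (condSnd D ℓ) := by
  constructor
  rw [condSnd_apply D ℓ MeasurableSet.univ]
  have : ({ℓ} : Set L) ×ˢ (Set.univ : Set X) = Prod.fst ⁻¹' {ℓ} := by
    ext x
    simp only [Set.mem_prod, Set.mem_singleton_iff, Set.mem_univ, and_true,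
      Set.mem_preimage, eq_comm]
  rw [this, ENNReal.inv_mul_cancel hp (measure_ne_top _ _)]

/-- `p.toReal * condSnd(s).toReal = D({ℓ}×s).toReal`, valid also when `p = 0`. -/
lemma mul_cond_toReal {L X : Type*} [MeasurableSpace L] [MeasurableSpace X]
    (D : Measure (L × X)) [IsFiniteMeasure D] (ℓ : L) {s : Set X} (hs : MeasurableSet s) :
    (D (Prod.fst ⁻¹' {ℓ})).toReal * (condSnd D ℓ s).toReal = (D ({ℓ} ×ˢ s)).toReal := by
  rcases eq_or_ne (D (Prod.fst ⁻¹' {ℓ})) 0 with hp | hp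
  · have h2 : D ({ℓ} ×ˢ s) = 0 :=
      le_antisymm (hp ▸ measure_mono (prod_subset_fiber ℓ s)) zero_le
    rw [hp, h2]; simp
  · rw [condSnd_apply D ℓ hs, ENNReal.toReal_mul, ENNReal.toReal_inv, ← mul_assoc,
      mul_inv_cancel₀ (by simp [ENNReal.toReal_ne_zero, hp, measure_ne_top]), one_mul]

lemma cond_le_one {L X : Type*} [MeasurableSpace L] [MeasurableSpace X]
    (D : Measure (L × X)) [IsFiniteMeasure D] (ℓ : L) {s : Set X} (hs : MeasurableSet s) :
    (condSnd D ℓ s).toReal ≤ 1 := by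
  rw [condSnd_apply D ℓ hs]
  rcases eq_or_ne (D (Prod.fst ⁻¹' {ℓ})) 0 with h | h
  · have : D ({ℓ} ×ˢ s) = 0 :=
      le_antisymm (h ▸ measure_mono (prod_subset_fiber ℓ s)) zero_le
    rw [this, mul_zero]; simp
  · have hle : (D (Prod.fst ⁻¹' {ℓ}))⁻¹ * D ({ℓ} ×ˢ s)
        ≤ (D (Prod.fst ⁻¹' {ℓ}))⁻¹ * D (Prod.fst ⁻¹' {ℓ}) :=
      mul_le_mul_right (measure_mono (prod_subset_fiber ℓ s)) _
    rw [ENNReal.inv_mul_cancel h (measure_ne_top _ _)] at hle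
    calc ((D (Prod.fst ⁻¹' {ℓ}))⁻¹ * D ({ℓ} ×ˢ s)).toReal ≤ (1 : ENNReal).toReal :=
          ENNReal.toReal_mono (by simp) hle
      _ = 1 := by simp

lemma toReal_prob_compl {α : Type*} [MeasurableSpace α] (μ : Measure α)
    [IsProbabilityMeasure μ] {s : Set α} (hs : MeasurableSet s) :
    (μ sᶜ).toReal = 1 - (μ s).toReal := by
  rw [measure_compl hs (measure_ne_top μ s), measure_univ,
    ENNReal.toReal_sub_of_le prob_le_one ENNReal.one_ne_top, ENNReal.toReal_one]

/-- for distributions `D, D̂` on `L × X` with `L` finite, the expectation over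
`ℓ` drawn from the marginal of `D` on `L` of the TV distance between the conditional
distributions of `x` given `ℓ` is at most `2 · d_TV(D, D̂)`. -/
theorem stmt3 {L X : Type*} [Fintype L] [MeasurableSpace L] [MeasurableSingletonClass L]
    [MeasurableSpace X]
    (D Dh : Measure (L × X)) [IsProbabilityMeasure D] [IsProbabilityMeasure Dh] :
    ∑ ℓ : L, (D (Prod.fst ⁻¹' {ℓ})).toReal * tvDist (condSnd D ℓ) (condSnd Dh ℓ)
      ≤ 2 * tvDist D Dh := by
  classical
  have hPm : ∀ ℓ : L, MeasurableSet (Prod.fst ⁻¹' ({ℓ} : Set L) : Set (L × X)) := fun ℓ =>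
    measurable_fst (measurableSet_singleton ℓ)
  set p : L → ENNReal := fun ℓ => D (Prod.fst ⁻¹' {ℓ}) with hp_def
  set q : L → ENNReal := fun ℓ => Dh (Prod.fst ⁻¹' {ℓ}) with hq_def
  refine le_of_forall_pos_le_add fun ε hε => ?_
  set n : ℝ := (Fintype.card L : ℝ) with hn_def
  have hn0 : (0 : ℝ) ≤ n := Nat.cast_nonneg _
  have hε' : 0 < ε / (n + 1) := div_pos hε (by linarith)
  set ε' : ℝ := ε / (n + 1) with hε'_def
  -- choose near-optimal sets
  have key : ∀ ℓ : L, ∃ s : {s : Set X // MeasurableSet s},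
      tvDist (condSnd D ℓ) (condSnd Dh ℓ)
        ≤ |((condSnd D ℓ) s.1).toReal - ((condSnd Dh ℓ) s.1).toReal| + ε' := by
    intro ℓ
    have h1 : tvDist (condSnd D ℓ) (condSnd Dh ℓ) - ε'
        < ⨆ s : {s : Set X // MeasurableSet s},
            |((condSnd D ℓ) s.1).toReal - ((condSnd Dh ℓ) s.1).toReal| := by
      rw [← tvDist]; linarith
    obtain ⟨i, hi⟩ := exists_lt_of_lt_ciSup h1
    exact ⟨i, by linarith⟩
  choose s hs using key
  -- sign-corrected sets
  set t : L → Set X := fun ℓ =>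
    if ((condSnd Dh ℓ) (s ℓ).1).toReal ≤ ((condSnd D ℓ) (s ℓ).1).toReal
    then (s ℓ).1 else ((s ℓ).1)ᶜ with ht_def
  have htm : ∀ ℓ, MeasurableSet (t ℓ) := by
    intro ℓ; rw [ht_def]; dsimp only
    split_ifs
    · exact (s ℓ).2
    · exact (s ℓ).2.compl
  have ht : ∀ ℓ, p ℓ ≠ 0 →
      |((condSnd D ℓ) (s ℓ).1).toReal - ((condSnd Dh ℓ) (s ℓ).1).toReal|
        ≤ ((condSnd D ℓ) (t ℓ)).toReal - ((condSnd Dh ℓ) (t ℓ)).toReal := by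
    intro ℓ hp
    rw [ht_def]; dsimp only
    split_ifs with hcond
    · rw [abs_of_nonneg (by linarith)]
    · push_neg at hcond
      have hq : q ℓ ≠ 0 := by
        intro h0
        have : Dh ({ℓ} ×ˢ (s ℓ).1) = 0 :=
          le_antisymm (h0 ▸ measure_mono (prod_subset_fiber ℓ (s ℓ).1)) zero_le
        rw [condSnd_apply Dh ℓ (s ℓ).2, this, mul_zero] at hcond
        simp at hcond
        have := ENNReal.toReal_nonneg (a := (condSnd D ℓ) (s ℓ).1)
        linarith
      haveI := condSnd_isProb D ℓ hp
      haveI := condSnd_isProb Dh ℓ hq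
      rw [toReal_prob_compl _ (s ℓ).2, toReal_prob_compl _ (s ℓ).2,
        abs_of_neg (by linarith)]
      linarith
  -- step 1 : bound each term
  have step1 : ∑ ℓ : L, (p ℓ).toReal * tvDist (condSnd D ℓ) (condSnd Dh ℓ)
      ≤ (∑ ℓ : L, (p ℓ).toReal *
          (((condSnd D ℓ) (t ℓ)).toReal - ((condSnd Dh ℓ) (t ℓ)).toReal)) + n * ε' := by
    have : ∀ ℓ : L, (p ℓ).toReal * tvDist (condSnd D ℓ) (condSnd Dh ℓ)
        ≤ (p ℓ).toReal *
            (((condSnd D ℓ) (t ℓ)).toReal - ((condSnd Dh ℓ) (t ℓ)).toReal) + ε' := by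
      intro ℓ
      rcases eq_or_ne (p ℓ) 0 with h0 | h0
      · rw [h0]; simp; linarith
      · have hp1 : (p ℓ).toReal ≤ 1 := by
          rw [hp_def]
          exact ENNReal.toReal_le_of_le_ofReal zero_le_one (by simpa using prob_le_one)
        have hpnn : 0 ≤ (p ℓ).toReal := ENNReal.toReal_nonneg
        calc (p ℓ).toReal * tvDist (condSnd D ℓ) (condSnd Dh ℓ)
            ≤ (p ℓ).toReal * ((((condSnd D ℓ) (t ℓ)).toReal
                - ((condSnd Dh ℓ) (t ℓ)).toReal) + ε') :=
              mul_le_mul_of_nonneg_left ((hs ℓ).trans (by linarith [ht ℓ h0])) hpnn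
          _ = (p ℓ).toReal * (((condSnd D ℓ) (t ℓ)).toReal
                - ((condSnd Dh ℓ) (t ℓ)).toReal) + (p ℓ).toReal * ε' := by ring
          _ ≤ _ := by nlinarith
    calc ∑ ℓ : L, (p ℓ).toReal * tvDist (condSnd D ℓ) (condSnd Dh ℓ)
        ≤ ∑ ℓ : L, ((p ℓ).toReal *
            (((condSnd D ℓ) (t ℓ)).toReal - ((condSnd Dh ℓ) (t ℓ)).toReal) + ε') :=
          Finset.sum_le_sum fun ℓ _ => this ℓ
      _ = _ := by
          rw [Finset.sum_add_distrib, Finset.sum_const, Finset.card_univ]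
          simp [hn_def, nsmul_eq_mul]
  -- step 2 : rewrite the weighted conditional differences
  have step2 : ∀ ℓ : L, (p ℓ).toReal *
      (((condSnd D ℓ) (t ℓ)).toReal - ((condSnd Dh ℓ) (t ℓ)).toReal)
      = ((D ({ℓ} ×ˢ t ℓ)).toReal - (Dh ({ℓ} ×ˢ t ℓ)).toReal)
        + ((q ℓ).toReal - (p ℓ).toReal) * ((condSnd Dh ℓ) (t ℓ)).toReal := by
    intro ℓ
    have h1 := mul_cond_toReal D ℓ (htm ℓ)
    have h2 := mul_cond_toReal Dh ℓ (htm ℓ)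
    simp only [hp_def, hq_def]
    rw [mul_sub, h1, ← h2]
    ring
  -- step 3 : first part bounded by tvDist D Dh
  have hA : MeasurableSet (⋃ ℓ : L, ({ℓ} : Set L) ×ˢ t ℓ) :=
    MeasurableSet.iUnion fun ℓ => (measurableSet_singleton ℓ).prod (htm ℓ)
  have hdisj : Pairwise (Function.onFun Disjoint fun ℓ : L => ({ℓ} : Set L) ×ˢ t ℓ) := by
    intro i j hij
    rw [Function.onFun, Set.disjoint_left]
    rintro ⟨a, b⟩ ⟨ha1, _⟩ ⟨ha2, _⟩
    exact hij (ha1.symm.trans ha2)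
  have hsum : ∀ M : Measure (L × X), M (⋃ ℓ : L, ({ℓ} : Set L) ×ˢ t ℓ)
      = ∑ ℓ : L, M ({ℓ} ×ˢ t ℓ) := by
    intro M
    rw [measure_iUnion hdisj fun ℓ => (measurableSet_singleton ℓ).prod (htm ℓ),
      tsum_fintype]
  have step3 : ∑ ℓ : L, ((D ({ℓ} ×ˢ t ℓ)).toReal - (Dh ({ℓ} ×ˢ t ℓ)).toReal)
      ≤ tvDist D Dh := by
    have hD : (D (⋃ ℓ : L, ({ℓ} : Set L) ×ˢ t ℓ)).toReal = ∑ ℓ : L, (D ({ℓ} ×ˢ t ℓ)).toReal := by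
      rw [hsum D, ENNReal.toReal_sum fun a _ => measure_ne_top _ _]
    have hDh : (Dh (⋃ ℓ : L, ({ℓ} : Set L) ×ˢ t ℓ)).toReal = ∑ ℓ : L, (Dh ({ℓ} ×ˢ t ℓ)).toReal := by
      rw [hsum Dh, ENNReal.toReal_sum fun a _ => measure_ne_top _ _]
    rw [Finset.sum_sub_distrib, ← hD, ← hDh]
    exact le_tvDist D Dh hA
  -- step 4 : second part bounded by tvDist D Dh
  have step4 : ∑ ℓ : L, ((q ℓ).toReal - (p ℓ).toReal) * ((condSnd Dh ℓ) (t ℓ)).toReal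
      ≤ tvDist D Dh := by
    set B : Finset L := Finset.univ.filter fun ℓ => (p ℓ).toReal ≤ (q ℓ).toReal with hB
    have hstep : ∑ ℓ : L, ((q ℓ).toReal - (p ℓ).toReal) * ((condSnd Dh ℓ) (t ℓ)).toReal
        ≤ ∑ ℓ ∈ B, ((q ℓ).toReal - (p ℓ).toReal) := by
      rw [Finset.sum_filter]
      refine Finset.sum_le_sum fun ℓ _ => ?_
      by_cases hc : (p ℓ).toReal ≤ (q ℓ).toReal
      · rw [if_pos hc]
        exact mul_le_of_le_one_right (by linarith) (cond_le_one Dh ℓ (htm ℓ))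
      · rw [if_neg hc]
        push_neg at hc
        exact mul_nonpos_of_nonpos_of_nonneg (by linarith) ENNReal.toReal_nonneg
    have hSm : MeasurableSet (⋃ ℓ ∈ B, Prod.fst ⁻¹' ({ℓ} : Set L)) :=
      MeasurableSet.biUnion B.countable_toSet fun ℓ _ => hPm ℓ
    have hdisj2 : (B : Set L).PairwiseDisjoint
        (fun ℓ : L => (Prod.fst ⁻¹' ({ℓ} : Set L) : Set (L × X))) := by
      intro i _ j _ hij
      rw [Function.onFun, Set.disjoint_left]
      rintro x hx1 hx2
      exact hij ((Set.mem_preimage.mp hx1).symm.trans (Set.mem_preimage.mp hx2))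
    have hsum2 : ∀ M : Measure (L × X), IsFiniteMeasure M →
        (M (⋃ ℓ ∈ B, Prod.fst ⁻¹' ({ℓ} : Set L))).toReal
        = ∑ ℓ ∈ B, (M (Prod.fst ⁻¹' ({ℓ} : Set L))).toReal := by
      intro M hM
      rw [measure_biUnion_finset hdisj2 fun ℓ _ => hPm ℓ,
        ENNReal.toReal_sum fun a _ => measure_ne_top _ _]
    calc ∑ ℓ : L, ((q ℓ).toReal - (p ℓ).toReal) * ((condSnd Dh ℓ) (t ℓ)).toReal
        ≤ ∑ ℓ ∈ B, ((q ℓ).toReal - (p ℓ).toReal) := hstep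
      _ = (Dh (⋃ ℓ ∈ B, Prod.fst ⁻¹' ({ℓ} : Set L))).toReal
            - (D (⋃ ℓ ∈ B, Prod.fst ⁻¹' ({ℓ} : Set L))).toReal := by
          rw [hsum2 Dh inferInstance, hsum2 D inferInstance, Finset.sum_sub_distrib]
      _ ≤ tvDist Dh D := le_tvDist Dh D hSm
      _ ≤ tvDist D Dh := by
          apply ciSup_le
          intro i
          rw [abs_sub_comm]
          exact le_ciSup (tv_bdd D Dh) i
  -- combine
  have hfinal : n * ε' ≤ ε := by
    rw [hε'_def]
    have h1 : n / (n + 1) ≤ 1 := by rw [div_le_one (by linarith)]; linarith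
    calc n * (ε / (n + 1)) = (n / (n + 1)) * ε := by ring
      _ ≤ 1 * ε := mul_le_mul_of_nonneg_right h1 hε.le
      _ = ε := one_mul ε
  calc ∑ ℓ : L, (p ℓ).toReal * tvDist (condSnd D ℓ) (condSnd Dh ℓ)
      ≤ (∑ ℓ : L, (p ℓ).toReal *
          (((condSnd D ℓ) (t ℓ)).toReal - ((condSnd Dh ℓ) (t ℓ)).toReal)) + n * ε' := step1
    _ = (∑ ℓ : L, ((D ({ℓ} ×ˢ t ℓ)).toReal - (Dh ({ℓ} ×ˢ t ℓ)).toReal))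
          + (∑ ℓ : L, ((q ℓ).toReal - (p ℓ).toReal) * ((condSnd Dh ℓ) (t ℓ)).toReal)
          + n * ε' := by
        rw [← Finset.sum_add_distrib]
        congr 1
        exact Finset.sum_congr rfl fun ℓ _ => step2 ℓ
    _ ≤ tvDist D Dh + tvDist D Dh + ε := by
        have := step3; have := step4; have := hfinal
        gcongr <;> linarith
    _ = 2 * tvDist D Dh + ε := by ring
end

section
/- For the uniform distribution on {−1,1}^k, any monotone Boolean function g : {−1,1}^k → {−1,1} has a coordinate i ∈ [k] with Cov[x_i, g(x)] ≥ c·(log k / k)·Var[g(x)] for some universal constant c > 0. -/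
open Finset

/-- The `±1` encoding of a Boolean value. -/
def sgn (b : Bool) : ℝ := if b then 1 else -1

/-- Expectation of `f` under the uniform distribution on `{-1,1}^k`. -/
noncomputable def unifE {k : ℕ} (f : (Fin k → Bool) → ℝ) : ℝ :=
  (∑ x : Fin k → Bool, f x) / (Fintype.card (Fin k → Bool) : ℝ)

namespace KKL

@[simp] lemma sgn_true : sgn true = 1 := rfl
@[simp] lemma sgn_false : sgn false = -1 := rfl
lemma sgn_not (b : Bool) : sgn (!b) = -sgn b := by cases b <;> simp
lemma sgn_mul_self (b : Bool) : sgn b * sgn b = 1 := by cases b <;> norm_num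
lemma sgn_sq (b : Bool) : sgn b ^ 2 = 1 := by cases b <;> norm_num

variable {k : ℕ}

lemma card_X (k : ℕ) : (Fintype.card (Fin k → Bool) : ℝ) = 2 ^ k := by
  simp [Fintype.card_fun]

lemma unifE_def (f : (Fin k → Bool) → ℝ) :
    unifE f = (∑ x : Fin k → Bool, f x) / 2 ^ k := by
  rw [unifE, card_X]

lemma unifE_congr {f g : (Fin k → Bool) → ℝ} (h : ∀ x, f x = g x) :
    unifE f = unifE g := by
  simp only [unifE]; congr 1; exact Finset.sum_congr rfl fun x _ => h x

@[simp] lemma unifE_const (c : ℝ) : unifE (fun _ : Fin k → Bool => c) = c := by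
  rw [unifE_def, Finset.sum_const, card_univ, Fintype.card_fun]
  field_simp
  simp [nsmul_eq_mul]

lemma unifE_add (f g : (Fin k → Bool) → ℝ) :
    unifE (fun x => f x + g x) = unifE f + unifE g := by
  simp [unifE_def, Finset.sum_add_distrib, add_div]

lemma unifE_sub (f g : (Fin k → Bool) → ℝ) :
    unifE (fun x => f x - g x) = unifE f - unifE g := by
  simp [unifE_def, Finset.sum_sub_distrib, sub_div]

lemma unifE_const_mul (c : ℝ) (f : (Fin k → Bool) → ℝ) :
    unifE (fun x => c * f x) = c * unifE f := by
  simp [unifE_def, ← Finset.mul_sum, mul_div_assoc]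

lemma unifE_sum {ι : Type*} (s : Finset ι) (F : ι → (Fin k → Bool) → ℝ) :
    unifE (fun x => ∑ i ∈ s, F i x) = ∑ i ∈ s, unifE (F i) := by
  simp [unifE_def, ← Finset.sum_div]; rw [Finset.sum_comm]

lemma unifE_nonneg {f : (Fin k → Bool) → ℝ} (h : ∀ x, 0 ≤ f x) : 0 ≤ unifE f := by
  rw [unifE_def]
  exact div_nonneg (Finset.sum_nonneg fun x _ => h x) (by positivity)

lemma unifE_mono {f g : (Fin k → Bool) → ℝ} (h : ∀ x, f x ≤ g x) : unifE f ≤ unifE g := by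
  rw [unifE_def, unifE_def]
  exact div_le_div_of_nonneg_right (Finset.sum_le_sum fun x _ => h x) (by positivity)
    |>.trans_eq rfl

/-- Cauchy–Schwarz for `unifE`. -/
lemma unifE_CS (u v : (Fin k → Bool) → ℝ) :
    (unifE (fun x => u x * v x)) ^ 2 ≤ unifE (fun x => u x * u x) * unifE (fun x => v x * v x) := by
  rw [unifE_def, unifE_def, unifE_def, div_pow, div_mul_div_comm, ← pow_mul,
    show (2:ℝ) ^ (k*2) = 2 ^ k * 2 ^ k by rw [mul_two, pow_add], ]
  apply div_le_div_of_nonneg_right (c := (2:ℝ) ^ k * 2 ^ k) ?_ (by positivity)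
  calc (∑ x : Fin k → Bool, u x * v x) ^ 2
      ≤ (∑ x : Fin k → Bool, u x ^ 2) * ∑ x : Fin k → Bool, v x ^ 2 :=
        Finset.sum_mul_sq_le_sq_mul_sq _ _ _
    _ = (∑ x : Fin k → Bool, u x * u x) * ∑ x : Fin k → Bool, v x * v x := by
        simp [sq]

/-- flip coordinate `i` -/
def flip (i : Fin k) (x : Fin k → Bool) : Fin k → Bool := Function.update x i (!(x i))

lemma flip_involutive (i : Fin k) : Function.Involutive (flip i) := by
  intro x
  funext j
  by_cases h : j = i
  · subst h; simp [flip, Function.update_self]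
  · simp [flip, Function.update_of_ne h]

lemma sum_flip (i : Fin k) (h : (Fin k → Bool) → ℝ) :
    ∑ x : Fin k → Bool, h (flip i x) = ∑ x : Fin k → Bool, h x :=
  Fintype.sum_bijective (flip i) (flip_involutive i).bijective _ h (fun _ => rfl)



/-- master factorization: sum over the cube of a product over coordinates -/
lemma sum_prod_split : ∀ (k : ℕ) (c : Fin k → Bool → ℝ),
    ∑ x : Fin k → Bool, ∏ i, c i (x i) = ∏ i, (c i true + c i false) := by
  intro k
  induction k with
  | zero => intro c; simp
  | succ n ih =>
    intro c
    rw [← (Fin.consEquiv (fun _ : Fin (n+1) => Bool)).sum_comp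
      (fun x => ∏ i, c i (x i))]
    rw [Fintype.sum_prod_type]
    simp only [Fin.consEquiv_apply]
    have : ∀ (b : Bool) (y : Fin n → Bool),
        ∏ i, c i (Fin.cons (α := fun _ => Bool) b y i) = c 0 b * ∏ i : Fin n, c i.succ (y i) := by
      intro b y
      rw [Fin.prod_univ_succ]
      simp
    simp only [this]
    rw [Fintype.sum_bool]
    simp only [← Finset.mul_sum, ← Finset.sum_mul]
    rw [← add_mul, ih (fun i b => c i.succ b), Fin.prod_univ_succ]

def chi (S : Finset (Fin k)) (x : Fin k → Bool) : ℝ := ∏ i ∈ S, sgn (x i)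

@[simp] lemma chi_empty (x : Fin k → Bool) : chi ∅ x = 1 := by simp [chi]

lemma chi_singleton (i : Fin k) (x : Fin k → Bool) : chi {i} x = sgn (x i) := by simp [chi]

lemma chi_eq_prod_univ (S : Finset (Fin k)) (x : Fin k → Bool) :
    chi S x = ∏ i, (if i ∈ S then sgn (x i) else 1) := by
  rw [chi, ← Finset.prod_filter]
  congr 1
  simp [Finset.filter_mem_eq_inter]

lemma sum_chi_mul_chi (S T : Finset (Fin k)) :
    ∑ x : Fin k → Bool, chi S x * chi T x = if S = T then (2:ℝ)^k else 0 := by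
  have h1 : ∀ x : Fin k → Bool, chi S x * chi T x
      = ∏ i, ((if i ∈ S then sgn (x i) else 1) * (if i ∈ T then sgn (x i) else 1)) := by
    intro x
    rw [chi_eq_prod_univ, chi_eq_prod_univ, ← Finset.prod_mul_distrib]
  simp only [h1]
  rw [sum_prod_split k (fun i b => (if i ∈ S then sgn b else 1) * (if i ∈ T then sgn b else 1))]
  by_cases hST : S = T
  · subst hST
    rw [if_pos rfl]
    have : ∀ i : Fin k, ((if i ∈ S then sgn true else 1) * (if i ∈ S then sgn true else 1)
        + (if i ∈ S then sgn false else 1) * (if i ∈ S then sgn false else 1)) = 2 := by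
      intro i; by_cases h : i ∈ S <;> simp [h] <;> try norm_num
    rw [Finset.prod_congr rfl (fun i _ => this i), Finset.prod_const]
    simp
  · rw [if_neg hST]
    have : ∃ i, (i ∈ S ∧ i ∉ T) ∨ (i ∈ T ∧ i ∉ S) := by
      by_contra hc
      push_neg at hc
      exact hST (Finset.ext fun i => ⟨fun h => (hc i).1 h, fun h => (hc i).2 h⟩)
    obtain ⟨i, hi⟩ := this
    apply Finset.prod_eq_zero (Finset.mem_univ i)
    rcases hi with ⟨h1, h2⟩ | ⟨h1, h2⟩ <;> simp [h1, h2] <;> norm_num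

lemma sum_chi (S : Finset (Fin k)) :
    ∑ x : Fin k → Bool, chi S x = if S = ∅ then (2:ℝ)^k else 0 := by
  have := sum_chi_mul_chi S (∅ : Finset (Fin k))
  simp only [chi_empty, mul_one] at this
  exact this

noncomputable def coef (f : (Fin k → Bool) → ℝ) (S : Finset (Fin k)) : ℝ :=
  unifE (fun x => f x * chi S x)

lemma coef_empty (f : (Fin k → Bool) → ℝ) : coef f ∅ = unifE f := by
  simp [coef]

/-- the diagonal kernel -/
lemma sum_chi_chi_diag (x y : Fin k → Bool) :
    ∑ S : Finset (Fin k), chi S x * chi S y = if x = y then (2:ℝ)^k else 0 := by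
  have h1 : ∀ S : Finset (Fin k), chi S x * chi S y = ∏ i ∈ S, (sgn (x i) * sgn (y i)) := by
    intro S; rw [chi, chi, Finset.prod_mul_distrib]
  simp only [h1]
  have h2 : ∑ S : Finset (Fin k), ∏ i ∈ S, (sgn (x i) * sgn (y i))
      = ∏ i, (sgn (x i) * sgn (y i) + 1) := by
    rw [Finset.prod_add, Finset.powerset_univ]
    apply Finset.sum_congr rfl
    intro S _
    simp
  rw [h2]
  by_cases hxy : x = y
  · subst hxy
    simp only [sgn_mul_self]
    norm_num
  · have : ∃ i, x i ≠ y i := by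
      by_contra hc; push_neg at hc; exact hxy (funext hc)
    obtain ⟨i, hi⟩ := this
    rw [if_neg hxy]
    apply Finset.prod_eq_zero (Finset.mem_univ i)
    cases hbx : x i <;> cases hby : y i <;> simp [hbx, hby] at hi ⊢ <;> norm_num

/-- Fourier inversion -/
lemma fourier_inversion (f : (Fin k → Bool) → ℝ) (x : Fin k → Bool) :
    ∑ S : Finset (Fin k), coef f S * chi S x = f x := by
  have step1 : ∀ S : Finset (Fin k),
      coef f S * chi S x = ∑ y : Fin k → Bool, f y * (chi S y * chi S x) / 2 ^ k := by
    intro S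
    rw [coef, unifE_def, div_mul_eq_mul_div, Finset.sum_mul, Finset.sum_div]
    apply Finset.sum_congr rfl
    intro y _
    ring
  rw [Finset.sum_congr rfl (fun S _ => step1 S), Finset.sum_comm]
  have step2 : ∀ y : Fin k → Bool,
      ∑ S : Finset (Fin k), f y * (chi S y * chi S x) / 2 ^ k
        = if y = x then f y else 0 := by
    intro y
    rw [← Finset.sum_div, ← Finset.mul_sum, sum_chi_chi_diag]
    by_cases h : y = x
    · rw [if_pos h, if_pos h]
      field_simp
    · rw [if_neg h, if_neg h, mul_zero, zero_div]
  rw [Finset.sum_congr rfl (fun y _ => step2 y), Finset.sum_ite_eq' univ x f, if_pos (mem_univ x)]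

/-- Parseval -/
lemma parseval (f h : (Fin k → Bool) → ℝ) :
    unifE (fun x => f x * h x) = ∑ S : Finset (Fin k), coef f S * coef h S := by
  have hpt : ∀ x, f x * h x = ∑ S : Finset (Fin k), coef h S * (f x * chi S x) := by
    intro x
    conv_lhs => rw [← fourier_inversion h x]
    rw [Finset.mul_sum]
    exact Finset.sum_congr rfl fun S _ => by ring
  rw [unifE_congr hpt, unifE_sum]
  apply Finset.sum_congr rfl
  intro S _
  rw [unifE_const_mul, ← coef]
  ring



/-! ### flip-based identities -/

lemma update_flip (i : Fin k) (x : Fin k → Bool) (b : Bool) :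
    Function.update (flip i x) i b = Function.update x i b := by
  funext j
  by_cases h : j = i
  · subst h; simp
  · simp [Function.update_of_ne h, flip, Function.update_of_ne h]

lemma flip_apply_self (i : Fin k) (x : Fin k → Bool) : flip i x i = !(x i) := by
  simp [flip]

lemma flip_apply_ne (i j : Fin k) (x : Fin k → Bool) (h : j ≠ i) : flip i x j = x j := by
  simp [flip, Function.update_of_ne h]

lemma sum_eq_zero_of_flip_neg (i : Fin k) (h : (Fin k → Bool) → ℝ)
    (H : ∀ x, h (flip i x) = - h x) : ∑ x : Fin k → Bool, h x = 0 := by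
  have h1 := sum_flip i h
  rw [Finset.sum_congr rfl (fun x _ => H x), Finset.sum_neg_distrib] at h1
  linarith

lemma key_sgn_identity (i : Fin k) (h : (Fin k → Bool) → ℝ) :
    2 * ∑ x : Fin k → Bool, sgn (x i) * h x
      = ∑ x : Fin k → Bool, (h (Function.update x i true) - h (Function.update x i false)) := by
  have pt : ∀ x : Fin k → Bool,
      h (Function.update x i true) - h (Function.update x i false)
        = sgn (x i) * (h x - h (flip i x)) := by
    intro x
    cases hb : x i
    · have e1 : Function.update x i false = x := by rw [← hb]; exact Function.update_eq_self i x
      have e2 : Function.update x i true = flip i x := by rw [flip, hb]; rfl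
      rw [e1, e2]
      simp only [sgn_false]
      ring
    · have e1 : Function.update x i true = x := by rw [← hb]; exact Function.update_eq_self i x
      have e2 : Function.update x i false = flip i x := by rw [flip, hb]; rfl
      rw [e1, e2]
      simp only [sgn_true]
      ring
  rw [Finset.sum_congr rfl (fun x _ => pt x)]
  have expand : ∀ x : Fin k → Bool, sgn (x i) * (h x - h (flip i x))
      = sgn (x i) * h x - sgn (x i) * h (flip i x) := fun x => by ring
  rw [Finset.sum_congr rfl (fun x _ => expand x), Finset.sum_sub_distrib]
  have h2 : ∑ x : Fin k → Bool, sgn (x i) * h (flip i x)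
      = - ∑ x : Fin k → Bool, sgn (x i) * h x := by
    have h3 := sum_flip i (fun x => sgn (x i) * h (flip i x))
    have h4 : ∀ x : Fin k → Bool,
        sgn (flip i x i) * h (flip i (flip i x)) = - (sgn (x i) * h x) := by
      intro x
      rw [flip_apply_self, flip_involutive i x, sgn_not]
      ring
    rw [Finset.sum_congr rfl (fun x _ => h4 x), Finset.sum_neg_distrib] at h3
    linarith
  rw [h2]
  ring

/-! ### discrete derivative -/

noncomputable def delta (f : (Fin k → Bool) → ℝ) (i : Fin k) : (Fin k → Bool) → ℝ :=
  fun x => (f (Function.update x i true) - f (Function.update x i false)) / 2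

lemma chi_update (S : Finset (Fin k)) (i : Fin k) (hi : i ∉ S) (x : Fin k → Bool) (b : Bool) :
    chi S (Function.update x i b) = chi S x := by
  apply Finset.prod_congr rfl
  intro j hj
  have : j ≠ i := fun h => hi (h ▸ hj)
  rw [Function.update_of_ne this]

lemma chi_flip_of_not_mem (S : Finset (Fin k)) (i : Fin k) (hi : i ∉ S) (x : Fin k → Bool) :
    chi S (flip i x) = chi S x := by
  apply Finset.prod_congr rfl
  intro j hj
  exact congrArg sgn (flip_apply_ne i j x (fun h => hi (h ▸ hj)))

lemma chi_flip_of_mem (S : Finset (Fin k)) (i : Fin k) (hi : i ∈ S) (x : Fin k → Bool) :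
    chi S (flip i x) = - chi S x := by
  rw [chi, chi, ← Finset.mul_prod_erase _ _ hi, ← Finset.mul_prod_erase _ (fun j => sgn (x j)) hi]
  rw [flip_apply_self, sgn_not]
  rw [Finset.prod_congr rfl (fun j hj =>
    congrArg sgn (flip_apply_ne i j x (Finset.ne_of_mem_erase hj)))]
  ring

lemma coef_delta_mem (f : (Fin k → Bool) → ℝ) (i : Fin k) (S : Finset (Fin k)) (hi : i ∈ S) :
    coef (delta f i) S = 0 := by
  rw [coef, unifE_def]
  rw [sum_eq_zero_of_flip_neg i _ ?_, zero_div]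
  intro x
  have hd : delta f i (flip i x) = delta f i x := by
    rw [delta, delta, update_flip, update_flip]
  simp only [hd, chi_flip_of_mem S i hi]
  ring

lemma coef_delta_not_mem (f : (Fin k → Bool) → ℝ) (i : Fin k) (S : Finset (Fin k)) (hi : i ∉ S) :
    coef (delta f i) S = coef f (insert i S) := by
  rw [coef, coef, unifE_def, unifE_def]
  congr 1
  have h1 : ∀ x : Fin k → Bool, f x * chi (insert i S) x = sgn (x i) * (f x * chi S x) := by
    intro x
    rw [chi, Finset.prod_insert hi, ← chi]
    ring
  rw [Finset.sum_congr rfl (fun x _ => h1 x)]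
  have h2 := key_sgn_identity i (fun x => f x * chi S x)
  have h3 : ∀ x : Fin k → Bool,
      f (Function.update x i true) * chi S (Function.update x i true)
        - f (Function.update x i false) * chi S (Function.update x i false)
      = 2 * (delta f i x * chi S x) := by
    intro x
    rw [chi_update S i hi, chi_update S i hi, delta]
    ring
  rw [Finset.sum_congr rfl (fun x _ => h3 x), ← Finset.mul_sum] at h2
  have h4 : ∑ x : Fin k → Bool, sgn (x i) * (f x * chi S x)
      = ∑ x : Fin k → Bool, delta f i x * chi S x := by linarith
  rw [← h4]

lemma coef_singleton (f : (Fin k → Bool) → ℝ) (i : Fin k) :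
    coef f {i} = unifE (delta f i) := by
  have h0 : ({i} : Finset (Fin k)) = insert i ∅ := by simp
  rw [h0, ← coef_delta_not_mem f i ∅ (Finset.notMem_empty i), coef_empty]

lemma unifE_sgn (i : Fin k) : unifE (fun x => sgn (x i)) = 0 := by
  rw [unifE_def, sum_eq_zero_of_flip_neg i _ ?_, zero_div]
  intro x
  rw [flip_apply_self, sgn_not]



/-! ### the noise operator -/

noncomputable def noise (ρ : ℝ) (f : (Fin k → Bool) → ℝ) : (Fin k → Bool) → ℝ :=
  fun x => unifE (fun y => f y * ∏ i, (1 + ρ * (sgn (x i) * sgn (y i))))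

lemma noise_fourier (ρ : ℝ) (f : (Fin k → Bool) → ℝ) (x : Fin k → Bool) :
    noise ρ f x = ∑ S : Finset (Fin k), ρ ^ S.card * coef f S * chi S x := by
  have kernel : ∀ y : Fin k → Bool,
      ∏ i, (1 + ρ * (sgn (x i) * sgn (y i)))
        = ∑ S : Finset (Fin k), ρ ^ S.card * (chi S x * chi S y) := by
    intro y
    have expand : ∏ i, (ρ * (sgn (x i) * sgn (y i)) + 1)
        = ∑ S : Finset (Fin k), ∏ i ∈ S, (ρ * (sgn (x i) * sgn (y i))) := by
      rw [Finset.prod_add, Finset.powerset_univ]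
      exact Finset.sum_congr rfl fun S _ => by simp
    have comm : ∀ i : Fin k, (1 + ρ * (sgn (x i) * sgn (y i)))
        = (ρ * (sgn (x i) * sgn (y i)) + 1) := fun i => by ring
    rw [Finset.prod_congr rfl (fun i _ => comm i), expand]
    apply Finset.sum_congr rfl
    intro S _
    rw [Finset.prod_mul_distrib, Finset.prod_const, chi, chi, Finset.prod_mul_distrib]
  have main : ∀ y : Fin k → Bool, f y * ∏ i, (1 + ρ * (sgn (x i) * sgn (y i)))
      = ∑ S : Finset (Fin k), (ρ ^ S.card * chi S x) * (f y * chi S y) := by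
    intro y
    rw [kernel y, Finset.mul_sum]
    exact Finset.sum_congr rfl fun S _ => by ring
  rw [noise, unifE_congr main, unifE_sum]
  apply Finset.sum_congr rfl
  intro S _
  rw [unifE_const_mul, ← coef]
  ring

lemma ip_chi (S T : Finset (Fin k)) :
    unifE (fun x => chi S x * chi T x) = if S = T then 1 else 0 := by
  rw [unifE_def, sum_chi_mul_chi]
  by_cases h : S = T
  · rw [if_pos h, if_pos h]; field_simp
  · rw [if_neg h, if_neg h, zero_div]

lemma coef_noise (ρ : ℝ) (f : (Fin k → Bool) → ℝ) (S : Finset (Fin k)) :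
    coef (noise ρ f) S = ρ ^ S.card * coef f S := by
  rw [coef]
  have h1 : ∀ x, noise ρ f x * chi S x
      = ∑ T : Finset (Fin k), (ρ ^ T.card * coef f T) * (chi T x * chi S x) := by
    intro x
    rw [noise_fourier, Finset.sum_mul]
    exact Finset.sum_congr rfl fun T _ => by ring
  rw [unifE_congr h1, unifE_sum]
  have h2 : ∀ T : Finset (Fin k),
      unifE (fun x => (ρ ^ T.card * coef f T) * (chi T x * chi S x))
        = if T = S then ρ ^ T.card * coef f T else 0 := by
    intro T
    rw [unifE_const_mul, ip_chi]
    by_cases h : T = S <;> simp [h]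
  rw [Finset.sum_congr rfl (fun T _ => h2 T), Finset.sum_ite_eq' univ S]
  simp

lemma noise_noise (ρ : ℝ) (f : (Fin k → Bool) → ℝ) (x : Fin k → Bool) :
    noise ρ (noise ρ f) x = noise (ρ ^ 2) f x := by
  rw [noise_fourier, noise_fourier]
  apply Finset.sum_congr rfl
  intro S _
  rw [coef_noise]
  rw [show ρ ^ S.card * (ρ ^ S.card * coef f S) = (ρ^2) ^ S.card * coef f S by
    rw [← pow_mul, two_mul, pow_add]; ring]

lemma unifE_noise_sq (ρ : ℝ) (f : (Fin k → Bool) → ℝ) :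
    unifE (fun x => noise ρ f x * noise ρ f x)
      = ∑ S : Finset (Fin k), (ρ ^ 2) ^ S.card * (coef f S) ^ 2 := by
  rw [parseval]
  apply Finset.sum_congr rfl
  intro S _
  rw [coef_noise]
  rw [← pow_mul, two_mul, pow_add]
  ring

/-! ### splitting off one coordinate -/

lemma sum_cons (G : (Fin (k+1) → Bool) → ℝ) :
    ∑ x : Fin (k+1) → Bool, G x
      = ∑ y : Fin k → Bool, (G (Fin.cons true y) + G (Fin.cons false y)) := by
  rw [← (Fin.consEquiv (fun _ : Fin (k+1) => Bool)).sum_comp G, Fintype.sum_prod_type,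
    Fintype.sum_bool, ← Finset.sum_add_distrib]
  rfl

lemma unifE_cons (G : (Fin (k+1) → Bool) → ℝ) :
    unifE G = (unifE (fun y => G (Fin.cons true y)) + unifE (fun y => G (Fin.cons false y))) / 2 := by
  rw [unifE_def, unifE_def, unifE_def, sum_cons, Finset.sum_add_distrib, pow_succ]
  have h2 : (2:ℝ) ^ k ≠ 0 := by positivity
  field_simp
  try ring

lemma unifE_avg (f g : (Fin k → Bool) → ℝ) :
    (unifE f + unifE g) / 2 = unifE (fun x => (f x + g x) / 2) := by
  have h1 : unifE (fun x => (f x + g x) / 2) = (1/2) * unifE (fun x => f x + g x) := by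
    rw [← unifE_const_mul]
    exact unifE_congr fun x => by ring
  rw [h1, unifE_add]
  ring

lemma noise_cons (ρ : ℝ) (f : (Fin (k+1) → Bool) → ℝ) (b : Bool) (x : Fin k → Bool) :
    noise ρ f (Fin.cons b x)
      = noise ρ (fun y => (f (Fin.cons true y) + f (Fin.cons false y)) / 2) x
        + ρ * sgn b * noise ρ (fun y => (f (Fin.cons true y) - f (Fin.cons false y)) / 2) x := by
  have prodsplit : ∀ (c : Bool) (z : Fin k → Bool),
      ∏ i : Fin (k+1), (1 + ρ * (sgn (Fin.cons (α := fun _ => Bool) b x i)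
          * sgn (Fin.cons (α := fun _ => Bool) c z i)))
        = (1 + ρ * (sgn b * sgn c)) * ∏ i : Fin k, (1 + ρ * (sgn (x i) * sgn (z i))) := by
    intro c z
    rw [Fin.prod_univ_succ]
    simp
  rw [noise, unifE_cons (G := fun y => f y
    * ∏ i, (1 + ρ * (sgn (Fin.cons (α := fun _ => Bool) b x i) * sgn (y i))))]
  simp only [prodsplit]
  rw [unifE_avg, noise, noise, ← unifE_const_mul (ρ * sgn b), ← unifE_add]
  apply unifE_congr
  intro z
  cases b <;> simp only [sgn_true, sgn_false] <;> ring



/-! ### hypercontractivity -/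

theorem hypercontractive (ρ : ℝ) (hρ : ρ ^ 2 ≤ 3⁻¹) :
    ∀ (k : ℕ) (f : (Fin k → Bool) → ℝ),
      unifE (fun x => (noise ρ f x) ^ 4) ≤ (unifE (fun x => (f x) ^ 2)) ^ 2 := by
  intro k
  induction k with
  | zero =>
    intro f
    have hx : ∀ x : Fin 0 → Bool, noise ρ f x = unifE f := by
      intro x
      rw [noise]
      apply unifE_congr
      intro y
      simp
    have h1 : unifE (fun x => (noise ρ f x) ^ 4) = (unifE f) ^ 4 := by
      rw [unifE_congr (fun x => by rw [hx x]), unifE_const]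
    have h2 : unifE (fun x : Fin 0 → Bool => (f x) ^ 2) = (unifE f) ^ 2 := by
      have : ∀ x : Fin 0 → Bool, f x = unifE f := by
        intro x
        have hu : ∀ y : Fin 0 → Bool, f y = f x := fun y => by
          congr 1; funext i; exact i.elim0
        rw [unifE_congr hu, unifE_const]
      rw [unifE_congr (fun x => by rw [this x]), unifE_const]
    rw [h1, h2, show (unifE f ^ 2) ^ 2 = unifE f ^ 4 by ring]
  | succ n ih =>
    intro f
    set h : (Fin n → Bool) → ℝ := fun y => (f (Fin.cons true y) + f (Fin.cons false y)) / 2 with hh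
    set l : (Fin n → Bool) → ℝ := fun y => (f (Fin.cons true y) - f (Fin.cons false y)) / 2 with hl
    set A : (Fin n → Bool) → ℝ := noise ρ h with hA
    set B : (Fin n → Bool) → ℝ := noise ρ l with hB
    have key : unifE (fun x => (noise ρ f x) ^ 4)
        = unifE (fun y => ((A y + ρ * B y) ^ 4 + (A y - ρ * B y) ^ 4) / 2) := by
      rw [unifE_cons (G := fun x => (noise ρ f x) ^ 4), unifE_avg]
      apply unifE_congr
      intro y
      have e1 : noise ρ f (Fin.cons true y) = A y + ρ * B y := by
        rw [noise_cons]; simp [hA, hB, hh, hl]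
      have e2 : noise ρ f (Fin.cons false y) = A y - ρ * B y := by
        rw [noise_cons]; simp [hA, hB, hh, hl]; ring
      rw [e1, e2]
    have ptbound : ∀ y, ((A y + ρ * B y) ^ 4 + (A y - ρ * B y) ^ 4) / 2
        ≤ A y ^ 4 + 2 * (A y ^ 2 * B y ^ 2) + B y ^ 4 := by
      intro y
      have hρ4 : ρ ^ 4 ≤ 1 := by
        have : (ρ^2)^2 ≤ 3⁻¹ ^ 2 := by
          apply pow_le_pow_left₀ (sq_nonneg ρ) hρ
        nlinarith [sq_nonneg ρ]
      have h1 : ρ^2 * (A y * B y)^2 ≤ 3⁻¹ * (A y * B y)^2 :=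
        mul_le_mul_of_nonneg_right hρ (sq_nonneg _)
      have h2 : ρ^4 * (B y^2)^2 ≤ 1 * (B y^2)^2 :=
        mul_le_mul_of_nonneg_right hρ4 (sq_nonneg _)
      nlinarith [h1, h2]
    have Ea4 := ih h
    have Eb4 := ih l
    set a : ℝ := unifE (fun y => A y ^ 4) with ha
    set b : ℝ := unifE (fun y => B y ^ 4) with hb
    have ha0 : 0 ≤ a := unifE_nonneg fun y => by positivity
    have hb0 : 0 ≤ b := unifE_nonneg fun y => by positivity
    have hp0 : 0 ≤ unifE (fun y => h y ^ 2) := unifE_nonneg fun y => sq_nonneg _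
    have hq0 : 0 ≤ unifE (fun y => l y ^ 2) := unifE_nonneg fun y => sq_nonneg _
    have cs : unifE (fun y => A y ^ 2 * B y ^ 2) ^ 2 ≤ a * b := by
      have := unifE_CS (fun y => A y ^ 2) (fun y => B y ^ 2)
      calc unifE (fun y => A y ^ 2 * B y ^ 2) ^ 2
          = unifE (fun y => (A y)^2 * (B y)^2) ^ 2 := rfl
        _ ≤ unifE (fun y => A y^2 * A y^2) * unifE (fun y => B y^2 * B y^2) := this
        _ = a * b := by
            rw [ha, hb]
            congr 1 <;> exact unifE_congr fun y => by ring
    have csle : unifE (fun y => A y ^ 2 * B y ^ 2) ≤ Real.sqrt a * Real.sqrt b := by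
      have h0 : 0 ≤ unifE (fun y => A y ^ 2 * B y ^ 2) := unifE_nonneg fun y => by positivity
      calc unifE (fun y => A y ^ 2 * B y ^ 2)
          = Real.sqrt ((unifE (fun y => A y ^ 2 * B y ^ 2))^2) := by
            rw [Real.sqrt_sq h0]
        _ ≤ Real.sqrt (a * b) := Real.sqrt_le_sqrt cs
        _ = Real.sqrt a * Real.sqrt b := Real.sqrt_mul ha0 _
    have sa : Real.sqrt a ≤ unifE (fun y => h y ^ 2) := by
      calc Real.sqrt a ≤ Real.sqrt ((unifE (fun y => h y ^ 2))^2) := Real.sqrt_le_sqrt Ea4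
        _ = unifE (fun y => h y ^ 2) := Real.sqrt_sq hp0
    have sb : Real.sqrt b ≤ unifE (fun y => l y ^ 2) := by
      calc Real.sqrt b ≤ Real.sqrt ((unifE (fun y => l y ^ 2))^2) := Real.sqrt_le_sqrt Eb4
        _ = unifE (fun y => l y ^ 2) := Real.sqrt_sq hq0
    have hsplit : unifE (fun x => f x ^ 2)
        = unifE (fun y => h y ^ 2) + unifE (fun y => l y ^ 2) := by
      rw [unifE_cons (G := fun x => f x ^ 2), unifE_avg, ← unifE_add]
      apply unifE_congr
      intro y
      simp only [hh, hl]
      ring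
    have sq_a : a = Real.sqrt a ^ 2 := (Real.sq_sqrt ha0).symm
    have sq_b : b = Real.sqrt b ^ 2 := (Real.sq_sqrt hb0).symm
    have sqa0 : 0 ≤ Real.sqrt a := Real.sqrt_nonneg a
    have sqb0 : 0 ≤ Real.sqrt b := Real.sqrt_nonneg b
    calc unifE (fun x => (noise ρ f x) ^ 4)
        = unifE (fun y => ((A y + ρ * B y) ^ 4 + (A y - ρ * B y) ^ 4) / 2) := key
      _ ≤ unifE (fun y => A y ^ 4 + 2 * (A y ^ 2 * B y ^ 2) + B y ^ 4) := unifE_mono ptbound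
      _ = a + 2 * unifE (fun y => A y ^ 2 * B y ^ 2) + b := by
          rw [unifE_add, unifE_add, unifE_const_mul]
      _ ≤ a + 2 * (Real.sqrt a * Real.sqrt b) + b := by
          have := csle
          nlinarith [csle]
      _ = (Real.sqrt a + Real.sqrt b) ^ 2 := by linear_combination sq_a + sq_b
      _ ≤ (unifE (fun y => h y ^ 2) + unifE (fun y => l y ^ 2)) ^ 2 := by
          apply pow_le_pow_left₀ (by positivity) (by linarith) 2
      _ = (unifE (fun x => f x ^ 2)) ^ 2 := by rw [hsplit]



/-! ### consequences of hypercontractivity for {0,1}-valued functions -/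

lemma hc_main (f : (Fin k → Bool) → ℝ) (hf : ∀ x, f x * f x = f x) :
    ∑ S : Finset (Fin k), (3⁻¹:ℝ) ^ S.card * (coef f S) ^ 2
      ≤ unifE f * Real.sqrt (unifE f) := by
  set I : ℝ := unifE f with hI
  have hI0 : 0 ≤ I := unifE_nonneg fun x => by nlinarith [hf x, sq_nonneg (f x)]
  set Q : ℝ := ∑ S : Finset (Fin k), (3⁻¹:ℝ) ^ S.card * (coef f S) ^ 2 with hQ
  have hQ0 : 0 ≤ Q := Finset.sum_nonneg fun S _ => by positivity
  set r : ℝ := Real.sqrt 3⁻¹ with hr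
  have hr2 : r ^ 2 = 3⁻¹ := Real.sq_sqrt (by norm_num)
  set h : (Fin k → Bool) → ℝ := noise 3⁻¹ f with hhdef
  have e1 : unifE (fun x => f x * h x) = Q := by
    rw [parseval]
    apply Finset.sum_congr rfl
    intro S _
    rw [coef_noise]
    ring
  have eQ : unifE (fun x => noise r f x * noise r f x) = Q := by
    rw [unifE_noise_sq, hr2]
  have e4 : unifE (fun x => h x ^ 4) ≤ Q ^ 2 := by
    have hpt : ∀ x, h x = noise r (noise r f) x := by
      intro x
      rw [noise_noise, hr2]
    calc unifE (fun x => h x ^ 4) = unifE (fun x => (noise r (noise r f) x) ^ 4) :=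
          unifE_congr fun x => by rw [hpt x]
      _ ≤ (unifE (fun x => (noise r f x) ^ 2)) ^ 2 := hypercontractive r (le_of_eq hr2) k _
      _ = Q ^ 2 := by
          have heq : (unifE fun x => (noise r f x) ^ 2) = Q := by
            rw [← eQ]; exact unifE_congr fun x => by ring
          rw [heq]
  have cs1 : Q ^ 2 ≤ I * unifE (fun x => f x * (h x * h x)) := by
    rw [← e1]
    calc unifE (fun x => f x * h x) ^ 2
        = unifE (fun x => f x * (f x * h x)) ^ 2 := by
          congr 1; exact unifE_congr fun x => by rw [show f x * (f x * h x) = (f x * f x) * h x from by ring, hf x]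
      _ ≤ unifE (fun x => f x * f x) * unifE (fun x => (f x * h x) * (f x * h x)) :=
          unifE_CS f (fun x => f x * h x)
      _ = I * unifE (fun x => f x * (h x * h x)) := by
          congr 1
          · rw [hI]; exact unifE_congr fun x => hf x
          · exact unifE_congr fun x => by
              rw [show (f x * h x) * (f x * h x) = (f x * f x) * (h x * h x) from by ring, hf x]
  have cs2 : unifE (fun x => f x * (h x * h x)) ^ 2 ≤ I * unifE (fun x => h x ^ 4) := by
    calc unifE (fun x => f x * (h x * h x)) ^ 2
        ≤ unifE (fun x => f x * f x) * unifE (fun x => (h x * h x) * (h x * h x)) :=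
          unifE_CS f (fun x => h x * h x)
      _ = I * unifE (fun x => h x ^ 4) := by
          congr 1
          · rw [hI]; exact unifE_congr fun x => hf x
          · exact unifE_congr fun x => by ring
  have final : Q ^ 4 ≤ I ^ 3 * Q ^ 2 := by
    have hfh2 : 0 ≤ unifE (fun x => f x * (h x * h x)) :=
      unifE_nonneg fun x => by nlinarith [hf x, sq_nonneg (f x), sq_nonneg (h x), sq_nonneg (f x * h x), mul_self_nonneg (f x * h x)]
    calc Q ^ 4 = (Q ^ 2) ^ 2 := by ring
      _ ≤ (I * unifE (fun x => f x * (h x * h x))) ^ 2 := by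
          apply pow_le_pow_left₀ (sq_nonneg Q) cs1
      _ = I ^ 2 * unifE (fun x => f x * (h x * h x)) ^ 2 := by ring
      _ ≤ I ^ 2 * (I * unifE (fun x => h x ^ 4)) :=
          mul_le_mul_of_nonneg_left cs2 (sq_nonneg I)
      _ ≤ I ^ 2 * (I * Q ^ 2) := by
          apply mul_le_mul_of_nonneg_left (mul_le_mul_of_nonneg_left e4 hI0) (sq_nonneg I)
      _ = I ^ 3 * Q ^ 2 := by ring
  rcases eq_or_lt_of_le hQ0 with hQz | hQp
  · rw [← hQz]; exact mul_nonneg hI0 (Real.sqrt_nonneg I)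
  · have hQ2 : Q ^ 2 ≤ I ^ 3 := by
      have h4 : Q ^ 2 * Q ^ 2 ≤ I ^ 3 * Q ^ 2 := by
        calc Q ^ 2 * Q ^ 2 = Q ^ 4 := by ring
          _ ≤ I ^ 3 * Q ^ 2 := final
      exact le_of_mul_le_mul_right h4 (pow_pos hQp 2)
    calc Q = Real.sqrt (Q ^ 2) := (Real.sqrt_sq hQ0).symm
      _ ≤ Real.sqrt (I ^ 3) := Real.sqrt_le_sqrt hQ2
      _ = I * Real.sqrt I := by
          rw [show I ^ 3 = I ^ 2 * I from by ring, Real.sqrt_mul (sq_nonneg I), Real.sqrt_sq hI0]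

/-! ### reindexing sums over subsets -/

lemma delta_reindex (f : (Fin k → Bool) → ℝ) (i : Fin k) (w : ℕ → ℝ) :
    ∑ S : Finset (Fin k), w S.card * (coef (delta f i) S) ^ 2
      = ∑ T ∈ univ.filter (fun T : Finset (Fin k) => i ∈ T), w (T.card - 1) * (coef f T) ^ 2 := by
  rw [← Finset.sum_filter_add_sum_filter_not univ (fun S : Finset (Fin k) => i ∈ S)]
  have hz : ∑ S ∈ univ.filter (fun S : Finset (Fin k) => i ∈ S),
      w S.card * (coef (delta f i) S) ^ 2 = 0 := by
    apply Finset.sum_eq_zero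
    intro S hS
    rw [coef_delta_mem f i S (Finset.mem_filter.mp hS).2]
    ring
  rw [hz, zero_add]
  apply Finset.sum_nbij' (i := fun S => insert i S) (j := fun T => T.erase i)
  · intro S hS
    simp only [Finset.mem_filter, Finset.mem_univ, true_and] at hS ⊢
    exact Finset.mem_insert_self i S
  · intro T hT
    simp only [Finset.mem_filter, Finset.mem_univ, true_and] at hT ⊢
    exact Finset.notMem_erase i T
  · intro S hS
    simp only [Finset.mem_filter, Finset.mem_univ, true_and] at hS
    exact Finset.erase_insert hS
  · intro T hT
    simp only [Finset.mem_filter, Finset.mem_univ, true_and] at hT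
    exact Finset.insert_erase hT
  · intro S hS
    simp only [Finset.mem_filter, Finset.mem_univ, true_and] at hS
    rw [coef_delta_not_mem f i S hS, Finset.card_insert_of_notMem hS, Nat.add_sub_cancel]

lemma swap_sum (G : Finset (Fin k) → ℝ) :
    ∑ i : Fin k, ∑ T ∈ univ.filter (fun T : Finset (Fin k) => i ∈ T), G T
      = ∑ T : Finset (Fin k), (T.card : ℝ) * G T := by
  have h1 : ∀ i : Fin k, ∑ T ∈ univ.filter (fun T : Finset (Fin k) => i ∈ T), G T
      = ∑ T : Finset (Fin k), if i ∈ T then G T else 0 := fun i => by rw [Finset.sum_filter]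
  rw [Finset.sum_congr rfl (fun i _ => h1 i), Finset.sum_comm]
  apply Finset.sum_congr rfl
  intro T _
  rw [Finset.sum_ite_mem, Finset.univ_inter, Finset.sum_const, nsmul_eq_mul]


end KKL

set_option maxHeartbeats 2000000 in
open KKL in
/-- there is a universal constant `c > 0` such that every monotone Boolean
function `g : {-1,1}^k → {-1,1}` (with `x` uniform) has a coordinate `i` with
`Cov[x_i, g(x)] ≥ c·(log k / k)·Var[g(x)]`. -/
theorem stmt13 :
    ∃ c : ℝ, 0 < c ∧
      ∀ (k : ℕ), 0 < k →
        ∀ g : (Fin k → Bool) → Bool,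
          (∀ x y : Fin k → Bool, (∀ i, x i ≤ y i) → g x ≤ g y) →
          ∃ i : Fin k,
            unifE (fun x => sgn (x i) * sgn (g x))
                - unifE (fun x => sgn (x i)) * unifE (fun x => sgn (g x))
              ≥ c * (Real.log k / k) *
                (unifE (fun x => sgn (g x) ^ 2) - (unifE (fun x => sgn (g x))) ^ 2) := by
  have hlog3 : 1 ≤ Real.log 3 := by
    rw [Real.le_log_iff_exp_le (by norm_num : (0:ℝ) < 3)]
    have := Real.exp_one_lt_d9
    norm_num at this ⊢
    linarith
  have hlog3pos : 0 < Real.log 3 := lt_of_lt_of_le one_pos hlog3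
  set c : ℝ := (16 * Real.log 3)⁻¹ with hc
  have hc0 : 0 < c := by positivity
  have hc16 : c ≤ 1 / 16 := by
    rw [hc]
    rw [show (1:ℝ)/16 = (16:ℝ)⁻¹ by norm_num]
    apply inv_anti₀ (by norm_num)
    linarith
  refine ⟨c, hc0, ?_⟩
  intro k hk g hmono
  set F : (Fin k → Bool) → ℝ := fun x => sgn (g x) with hF
  have hF1 : ∀ x, F x * F x = 1 := fun x => sgn_mul_self (g x)
  set W : Finset (Fin k) → ℝ := fun S => (coef F S) ^ 2 with hW
  have hWnn : ∀ S, 0 ≤ W S := fun S => sq_nonneg _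
  -- derivative facts
  have hdelta01 : ∀ (i : Fin k) (x : Fin k → Bool), delta F i x = 0 ∨ delta F i x = 1 := by
    intro i x
    have hmono' : g (Function.update x i false) ≤ g (Function.update x i true) := by
      apply hmono
      intro j
      by_cases hj : j = i
      · subst hj; simp
      · rw [Function.update_of_ne hj, Function.update_of_ne hj]
    have hd : delta F i x
        = (sgn (g (Function.update x i true)) - sgn (g (Function.update x i false))) / 2 := rfl
    cases h1 : g (Function.update x i true) <;> cases h2 : g (Function.update x i false) <;>
      rw [h1, h2] at hmono' hd
    · left; rw [hd]; norm_num
    · exact absurd hmono' (by decide)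
    · right; rw [hd]; norm_num
    · left; rw [hd]; norm_num
  have hdsq : ∀ (i : Fin k) (x : Fin k → Bool), delta F i x * delta F i x = delta F i x := by
    intro i x
    rcases hdelta01 i x with h | h <;> rw [h] <;> ring
  set infl : Fin k → ℝ := fun i => unifE (delta F i) with hinfl
  have hinfl0 : ∀ i, 0 ≤ infl i := by
    intro i
    apply unifE_nonneg
    intro x
    rcases hdelta01 i x with h | h <;> rw [h] <;> norm_num
  -- spectral representation of influences
  have hinflW : ∀ i, infl i = ∑ T ∈ univ.filter (fun T : Finset (Fin k) => i ∈ T), W T := by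
    intro i
    have p1 : infl i = unifE (fun x => delta F i x * delta F i x) :=
      unifE_congr (fun x => (hdsq i x).symm)
    have p2 := delta_reindex F i (fun _ => (1:ℝ))
    rw [p1, parseval]
    calc ∑ S : Finset (Fin k), coef (delta F i) S * coef (delta F i) S
        = ∑ S : Finset (Fin k), (1:ℝ) * (coef (delta F i) S) ^ 2 := by
          apply Finset.sum_congr rfl; intro S _; ring
      _ = ∑ T ∈ univ.filter (fun T : Finset (Fin k) => i ∈ T), (1:ℝ) * (coef F T) ^ 2 := p2
      _ = ∑ T ∈ univ.filter (fun T : Finset (Fin k) => i ∈ T), W T := by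
          apply Finset.sum_congr rfl; intro T _; rw [hW]; ring
  -- hypercontractive bound per coordinate
  have hQbound : ∀ i, ∑ T ∈ univ.filter (fun T : Finset (Fin k) => i ∈ T),
      (3⁻¹:ℝ) ^ (T.card - 1) * W T ≤ Real.sqrt (infl i) * infl i := by
    intro i
    have p2 := delta_reindex F i (fun n => (3⁻¹:ℝ) ^ n)
    have p3 := hc_main (delta F i) (hdsq i)
    calc ∑ T ∈ univ.filter (fun T : Finset (Fin k) => i ∈ T), (3⁻¹:ℝ) ^ (T.card - 1) * W T
        = ∑ S : Finset (Fin k), (3⁻¹:ℝ) ^ S.card * (coef (delta F i) S) ^ 2 := p2.symm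
      _ ≤ unifE (delta F i) * Real.sqrt (unifE (delta F i)) := p3
      _ = Real.sqrt (infl i) * infl i := by rw [hinfl]; ring
  -- the maximal influence
  obtain ⟨i₀, -, hmax⟩ := Finset.exists_max_image univ infl ⟨⟨0, hk⟩, Finset.mem_univ _⟩
  set M : ℝ := infl i₀ with hM
  have hM0 : 0 ≤ M := hinfl0 i₀
  have hkM0 : 0 ≤ (k:ℝ) * M := by positivity
  have hsum_infl : ∑ i : Fin k, infl i ≤ (k:ℝ) * M := by
    calc ∑ i : Fin k, infl i ≤ ∑ _i : Fin k, M :=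
          Finset.sum_le_sum fun i _ => hmax i (Finset.mem_univ i)
      _ = (k:ℝ) * M := by rw [Finset.sum_const, Finset.card_univ, Fintype.card_fin, nsmul_eq_mul]
  have hSI : ∑ T : Finset (Fin k), (T.card : ℝ) * W T ≤ (k:ℝ) * M := by
    rw [← swap_sum W]
    calc ∑ i : Fin k, ∑ T ∈ univ.filter (fun T : Finset (Fin k) => i ∈ T), W T
        = ∑ i : Fin k, infl i := by
          apply Finset.sum_congr rfl; intro i _; rw [← hinflW i]
      _ ≤ (k:ℝ) * M := hsum_infl
  have hSQ : ∑ T : Finset (Fin k), (T.card : ℝ) * ((3⁻¹:ℝ) ^ (T.card - 1) * W T)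
      ≤ Real.sqrt M * ((k:ℝ) * M) := by
    rw [← swap_sum (fun T => (3⁻¹:ℝ) ^ (T.card - 1) * W T)]
    calc ∑ i : Fin k, ∑ T ∈ univ.filter (fun T : Finset (Fin k) => i ∈ T),
          (3⁻¹:ℝ) ^ (T.card - 1) * W T
        ≤ ∑ i : Fin k, Real.sqrt (infl i) * infl i := Finset.sum_le_sum fun i _ => hQbound i
      _ ≤ ∑ i : Fin k, Real.sqrt M * infl i := by
          apply Finset.sum_le_sum
          intro i _
          exact mul_le_mul_of_nonneg_right
            (Real.sqrt_le_sqrt (hmax i (Finset.mem_univ i))) (hinfl0 i)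
      _ = Real.sqrt M * ∑ i : Fin k, infl i := by rw [Finset.mul_sum]
      _ ≤ Real.sqrt M * ((k:ℝ) * M) :=
          mul_le_mul_of_nonneg_left hsum_infl (Real.sqrt_nonneg M)
  have hWtot : ∑ T : Finset (Fin k), W T = 1 := by
    calc ∑ T : Finset (Fin k), W T
        = ∑ T : Finset (Fin k), coef F T * coef F T := by
          apply Finset.sum_congr rfl; intro T _; rw [hW]; ring
      _ = unifE (fun x => F x * F x) := (parseval F F).symm
      _ = 1 := by rw [unifE_congr hF1, unifE_const]
  set Var : ℝ := ∑ T ∈ univ.erase ∅, W T with hVar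
  have hVar0 : 0 ≤ Var := Finset.sum_nonneg fun T _ => hWnn T
  have hVar1 : Var ≤ 1 := by
    rw [← hWtot, hVar]
    exact Finset.sum_le_sum_of_subset_of_nonneg (Finset.erase_subset _ _)
      (fun T _ _ => hWnn T)
  have hVar_eq : unifE (fun x => sgn (g x) ^ 2) - (unifE (fun x => sgn (g x))) ^ 2 = Var := by
    have e1 : unifE (fun x => sgn (g x) ^ 2) = 1 := by
      rw [unifE_congr (fun x => sgn_sq (g x)), unifE_const]
    have e2 : (unifE (fun x => sgn (g x))) ^ 2 = W ∅ := by
      have : unifE (fun x => sgn (g x)) = coef F ∅ := (coef_empty F).symm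
      rw [this, hW]
    have e3 := Finset.sum_erase_add univ W (Finset.mem_univ (∅ : Finset (Fin k)))
    rw [hWtot] at e3
    rw [e1, e2, hVar]
    linarith
  -- reduce the goal to a bound on M
  suffices hMbound : c * (Real.log k / k) * Var ≤ M by
    refine ⟨i₀, ?_⟩
    rw [unifE_sgn i₀, zero_mul, sub_zero, hVar_eq]
    have e4 : unifE (fun x => sgn (x i₀) * sgn (g x)) = M := by
      have h5 : coef F {i₀} = M := coef_singleton F i₀
      rw [← h5, coef]
      apply unifE_congr
      intro x
      simp only [hF, chi_singleton]
      ring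
    rw [e4]
    exact hMbound
  -- now prove the bound on the maximal influence
  clear_value F W infl M Var
  clear hVar_eq hWtot hQbound hinflW hdsq hdelta01 hF1 hmax hsum_infl hmono g hF hW hinfl hM
  by_cases hk1 : k = 1
  · subst hk1
    simp only [Nat.cast_one, Real.log_one, zero_div, mul_zero, zero_mul]
    exact hM0
  · have hk2 : 2 ≤ k := by omega
    have hkR0 : (0:ℝ) < k := by exact_mod_cast hk
    have hkR1 : (1:ℝ) < k := by exact_mod_cast (by omega : 1 < k)
    set L : ℝ := Real.log k with hLdef
    have hL0 : 0 < L := Real.log_pos hkR1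
    have hexpL : Real.exp L = k := Real.exp_log hkR0
    set z : ℝ := L / (8 * Real.log 3) with hzdef
    have hz0 : 0 < z := by positivity
    set t : ℕ := ⌊z⌋₊ + 1 with htdef
    have htR : (t:ℝ) = (⌊z⌋₊ : ℝ) + 1 := by rw [htdef]; push_cast; ring
    have htpos : (0:ℝ) < t := by rw [htR]; positivity
    have hzt : z ≤ t := by rw [htR]; exact (Nat.lt_floor_add_one z).le
    have hz8 : z ≤ L / 8 := by
      rw [hzdef]
      exact div_le_div_of_nonneg_left hL0.le (by norm_num) (by nlinarith [hlog3])
    have ht8 : (t:ℝ) ≤ L / 8 + 1 := by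
      rw [htR]
      have := Nat.floor_le hz0.le
      linarith
    have htexp : (t:ℝ) ≤ Real.exp (L / 8) := by
      have := Real.add_one_le_exp (L / 8)
      linarith
    have ht1 : t - 1 = ⌊z⌋₊ := by omega
    clear_value t
    have hpow3 : (3:ℝ) ^ (t - 1) ≤ Real.exp (L / 8) := by
      rw [ht1]
      have e : (3:ℝ) ^ (⌊z⌋₊) = Real.exp ((⌊z⌋₊ : ℝ) * Real.log 3) := by
        rw [Real.exp_nat_mul, Real.exp_log (by norm_num : (0:ℝ) < 3)]
      rw [e]
      apply Real.exp_le_exp.mpr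
      have hfz : (⌊z⌋₊:ℝ) ≤ z := Nat.floor_le hz0.le
      have hzl : z * Real.log 3 = L / 8 := by
        rw [hzdef]; field_simp
      calc (⌊z⌋₊:ℝ) * Real.log 3 ≤ z * Real.log 3 :=
            mul_le_mul_of_nonneg_right hfz hlog3pos.le
        _ = L / 8 := hzl
    -- level decomposition
    have hsplit := Finset.sum_filter_add_sum_filter_not (univ.erase (∅ : Finset (Fin k)))
      (fun T => T.card ≤ t) W
    have hB1 : ∑ T ∈ (univ.erase (∅ : Finset (Fin k))).filter (fun T => T.card ≤ t), W T
        ≤ (3:ℝ) ^ (t - 1) * (Real.sqrt M * ((k:ℝ) * M)) := by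
      have step : ∀ T ∈ (univ.erase (∅:Finset (Fin k))).filter (fun T => T.card ≤ t),
          W T ≤ (3:ℝ) ^ (t-1) * ((T.card:ℝ) * ((3⁻¹:ℝ) ^ (T.card - 1) * W T)) := by
        intro T hT
        obtain ⟨hTe, hTc⟩ := Finset.mem_filter.mp hT
        have hTne : T ≠ ∅ := (Finset.mem_erase.mp hTe).1
        have hc1 : 1 ≤ T.card := Finset.card_pos.mpr (Finset.nonempty_iff_ne_empty.mpr hTne)
        have hc1R : (1:ℝ) ≤ (T.card:ℝ) := by exact_mod_cast hc1
        have hpw : (1:ℝ) ≤ (3:ℝ)^(t-1) * (3⁻¹:ℝ)^(T.card-1) := by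
          rw [inv_pow, ← div_eq_mul_inv, le_div_iff₀ (by positivity), one_mul]
          exact pow_le_pow_right₀ (by norm_num) (by omega)
        calc W T = 1 * W T := (one_mul _).symm
          _ ≤ ((3:ℝ)^(t-1) * (3⁻¹:ℝ)^(T.card-1) * (T.card:ℝ)) * W T := by
              apply mul_le_mul_of_nonneg_right ?_ (hWnn T)
              nlinarith [hpw, hc1R]
          _ = (3:ℝ)^(t-1) * ((T.card:ℝ) * ((3⁻¹:ℝ)^(T.card-1) * W T)) := by ring
      calc ∑ T ∈ (univ.erase (∅:Finset (Fin k))).filter (fun T => T.card ≤ t), W T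
          ≤ ∑ T ∈ (univ.erase (∅:Finset (Fin k))).filter (fun T => T.card ≤ t),
            (3:ℝ)^(t-1) * ((T.card:ℝ) * ((3⁻¹:ℝ)^(T.card-1) * W T)) := Finset.sum_le_sum step
        _ = (3:ℝ)^(t-1) * ∑ T ∈ (univ.erase (∅:Finset (Fin k))).filter (fun T => T.card ≤ t),
            ((T.card:ℝ) * ((3⁻¹:ℝ)^(T.card-1) * W T)) := by rw [Finset.mul_sum]
        _ ≤ (3:ℝ)^(t-1) * ∑ T : Finset (Fin k),
            ((T.card:ℝ) * ((3⁻¹:ℝ)^(T.card-1) * W T)) := by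
            apply mul_le_mul_of_nonneg_left ?_ (by positivity)
            apply Finset.sum_le_sum_of_subset_of_nonneg (Finset.subset_univ _)
            intro T _ _
            have := hWnn T
            positivity
        _ ≤ (3:ℝ)^(t-1) * (Real.sqrt M * ((k:ℝ) * M)) :=
            mul_le_mul_of_nonneg_left hSQ (by positivity)
    have hB2 : ∑ T ∈ (univ.erase (∅ : Finset (Fin k))).filter (fun T => ¬ T.card ≤ t), W T
        ≤ (1/(t:ℝ)) * ((k:ℝ) * M) := by
      have step : ∀ T ∈ (univ.erase (∅:Finset (Fin k))).filter (fun T => ¬ T.card ≤ t),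
          W T ≤ (1/(t:ℝ)) * ((T.card:ℝ) * W T) := by
        intro T hT
        have hTc : t < T.card := not_le.mp (Finset.mem_filter.mp hT).2
        have hcast : (t:ℝ) ≤ (T.card:ℝ) := by exact_mod_cast hTc.le
        rw [one_div, ← div_eq_inv_mul, le_div_iff₀ htpos]
        calc W T * t ≤ W T * T.card := mul_le_mul_of_nonneg_left hcast (hWnn T)
          _ = (T.card:ℝ) * W T := by ring
      calc ∑ T ∈ (univ.erase (∅:Finset (Fin k))).filter (fun T => ¬ T.card ≤ t), W T
          ≤ ∑ T ∈ (univ.erase (∅:Finset (Fin k))).filter (fun T => ¬ T.card ≤ t),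
            (1/(t:ℝ)) * ((T.card:ℝ) * W T) := Finset.sum_le_sum step
        _ = (1/(t:ℝ)) * ∑ T ∈ (univ.erase (∅:Finset (Fin k))).filter (fun T => ¬ T.card ≤ t),
            ((T.card:ℝ) * W T) := by rw [Finset.mul_sum]
        _ ≤ (1/(t:ℝ)) * ∑ T : Finset (Fin k), ((T.card:ℝ) * W T) := by
            apply mul_le_mul_of_nonneg_left ?_ (by positivity)
            apply Finset.sum_le_sum_of_subset_of_nonneg (Finset.subset_univ _)
            intro T _ _
            have := hWnn T
            positivity
        _ ≤ (1/(t:ℝ)) * ((k:ℝ) * M) := mul_le_mul_of_nonneg_left hSI (by positivity)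
    have hmain : Var ≤ (3:ℝ)^(t-1) * (Real.sqrt M * ((k:ℝ)*M)) + (1/(t:ℝ))*((k:ℝ)*M) := by
      rw [hVar, ← hsplit]
      exact add_le_add hB1 hB2
    rcases le_total M (Real.exp (-(L/2))) with hMB | hMA
    · -- small max influence case
      have hsqM : Real.sqrt M ≤ Real.exp (-(L/4)) := by
        have h1 : Real.exp (-(L/2)) = Real.exp (-(L/4)) * Real.exp (-(L/4)) := by
          rw [← Real.exp_add]; ring_nf
        calc Real.sqrt M ≤ Real.sqrt (Real.exp (-(L/2))) := Real.sqrt_le_sqrt hMB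
          _ = Real.exp (-(L/4)) := by rw [h1, Real.sqrt_mul_self (Real.exp_nonneg _)]
      have hterm1 : (3:ℝ)^(t-1) * (Real.sqrt M * ((k:ℝ)*M)) ≤ (1/(t:ℝ))*((k:ℝ)*M) := by
        have e1 : (3:ℝ)^(t-1) * (Real.sqrt M * ((k:ℝ)*M))
            ≤ Real.exp (L/8) * (Real.exp (-(L/4)) * ((k:ℝ)*M)) := by
          apply mul_le_mul hpow3 (mul_le_mul_of_nonneg_right hsqM hkM0) ?_ (Real.exp_nonneg _)
          exact mul_nonneg (Real.sqrt_nonneg M) hkM0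
        have e2 : Real.exp (L/8) * (Real.exp (-(L/4)) * ((k:ℝ)*M))
            = Real.exp (-(L/8)) * ((k:ℝ)*M) := by
          rw [← mul_assoc, ← Real.exp_add]
          ring_nf
        have e3 : Real.exp (-(L/8)) ≤ 1/(t:ℝ) := by
          rw [Real.exp_neg, one_div]
          exact inv_anti₀ htpos htexp
        calc (3:ℝ)^(t-1) * (Real.sqrt M * ((k:ℝ)*M))
            ≤ Real.exp (-(L/8)) * ((k:ℝ)*M) := by rw [← e2]; exact e1
          _ ≤ (1/(t:ℝ)) * ((k:ℝ)*M) := mul_le_mul_of_nonneg_right e3 hkM0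
      have hVt : Var ≤ 2 * ((k:ℝ)*M) / t := by
        calc Var ≤ (3:ℝ)^(t-1) * (Real.sqrt M * ((k:ℝ)*M)) + (1/(t:ℝ))*((k:ℝ)*M) := hmain
          _ ≤ (1/(t:ℝ))*((k:ℝ)*M) + (1/(t:ℝ))*((k:ℝ)*M) := by linarith [hterm1]
          _ = 2 * ((k:ℝ)*M) / t := by ring
      have hVz : Var ≤ 2 * ((k:ℝ)*M) / z :=
        hVt.trans (div_le_div_of_nonneg_left (by positivity) hz0 hzt)
      have hdenom : 2 * ((k:ℝ)*M) / z = 16 * Real.log 3 * ((k:ℝ)*M) / L := by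
        rw [hzdef]
        field_simp
        ring
      have hVL : Var * L ≤ 16 * Real.log 3 * ((k:ℝ)*M) := by
        rw [hdenom] at hVz
        exact (le_div_iff₀ hL0).mp hVz
      calc c * (L / k) * Var = (Var * L) * (c / k) := by ring
        _ ≤ (16 * Real.log 3 * ((k:ℝ)*M)) * (c / k) := by
            apply mul_le_mul_of_nonneg_right hVL
            positivity
        _ = M := by
            rw [hc]
            field_simp
    · -- large max influence case
      have h1 : c * L ≤ Real.exp (L/2) := by
        have h2 := Real.add_one_le_exp (L/2)
        have h3 : c * L ≤ (1/16) * L := mul_le_mul_of_nonneg_right hc16 hL0.le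
        linarith
      have h4 : c * (L/(k:ℝ)) ≤ Real.exp (-(L/2)) := by
        have h5 : Real.exp (-(L/2)) * (k:ℝ) = Real.exp (L/2) := by
          nth_rewrite 1 [← hexpL]
          rw [← Real.exp_add]
          ring_nf
        rw [show c * (L/(k:ℝ)) = c * L / k from by ring, div_le_iff₀ hkR0, h5]
        exact h1
      calc c * (L / k) * Var ≤ c * (L / k) * 1 := by
            apply mul_le_mul_of_nonneg_left hVar1
            exact mul_nonneg hc0.le (div_nonneg hL0.le hkR0.le)
        _ = c * (L / k) := mul_one _
        _ ≤ Real.exp (-(L/2)) := h4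
        _ ≤ M := hMA
end
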